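/- arXiv:2401.11563 — 2 statements merged into one kernel-verified Lean document; each statement's English description precedes it below -/
import Mathlib

section
/- Let V be a symmetric positive definite real d×d matrix, θ̂ ∈ ℝ^d, β ≥ 0, and B := {θ ∈ ℝ^d : ‖θ̂ − θ‖_V ≤ β}. Let α, r_b ∈ ℝ and let φ, ψ ∈ ℝ^d with ‖φ‖₂ ≤ 1. If ψᵀθ̂ ≤ −β/√(λ_min(V)) + (1 − α)·r_b and φᵀθ̂ ≤ ψᵀθ̂, then for every v ∈ B one has φᵀv ≤ (1 − α)·r_b. -/
open Matrix

open scoped Classical in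
/-- smallest eigenvalue of a real matrix (junk value 0 if not Hermitian) -/
noncomputable def lamMin {d : ℕ} (V : Matrix (Fin d) (Fin d) ℝ) : ℝ :=
  if h : V.IsHermitian then ⨅ i, h.eigenvalues i else 0

open scoped Classical in
/-- largest eigenvalue of a real matrix (junk value 0 if not Hermitian) -/
noncomputable def lamMax {d : ℕ} (V : Matrix (Fin d) (Fin d) ℝ) : ℝ :=
  if h : V.IsHermitian then ⨆ i, h.eigenvalues i else 0

/-- weighted norm ‖z‖_V = √(zᵀ V z) -/
noncomputable def wnorm {d : ℕ} (V : Matrix (Fin d) (Fin d) ℝ) (z : Fin d → ℝ) : ℝ :=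
  Real.sqrt (z ⬝ᵥ V.mulVec z)

/-- Euclidean norm of a vector in ℝ^d -/
noncomputable def eucNorm {d : ℕ} (z : Fin d → ℝ) : ℝ :=
  Real.sqrt (z ⬝ᵥ z)

/-!
Write `z = θ̂ - v` for `v ∈ B`. Cauchy–Schwarz and `‖φ‖₂ ≤ 1` give `|φᵀz| ≤ ‖z‖₂`, and the Rayleigh
bound `λ_min(V) ‖z‖₂² ≤ zᵀVz` gives `‖z‖₂ ≤ ‖z‖_V / √λ_min(V) ≤ β / √λ_min(V)`. Hence
`φᵀv = φᵀθ̂ - φᵀz ≤ ψᵀθ̂ + β / √λ_min(V) ≤ (1 - α) r_b`.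
-/

lemma eucNorm_eq_norm_toLp {d : ℕ} (z : Fin d → ℝ) : eucNorm z = ‖WithLp.toLp 2 z‖ := by
  rw [norm_eq_sqrt_real_inner, EuclideanSpace.inner_toLp_toLp, star_trivial, eucNorm]

lemma eucNorm_nonneg {d : ℕ} (z : Fin d → ℝ) : 0 ≤ eucNorm z :=
  Real.sqrt_nonneg _

lemma abs_dotProduct_le_eucNorm_mul_eucNorm {d : ℕ} (x y : Fin d → ℝ) :
    |x ⬝ᵥ y| ≤ eucNorm x * eucNorm y := by
  simpa only [eucNorm_eq_norm_toLp, EuclideanSpace.inner_toLp_toLp, star_trivial,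
    dotProduct_comm y] using abs_real_inner_le_norm (WithLp.toLp 2 x) (WithLp.toLp 2 y)

section lamMin

variable {d : ℕ} {V : Matrix (Fin d) (Fin d) ℝ}

lemma lamMin_le_eigenvalues (hV : V.IsHermitian) (i : Fin d) : lamMin V ≤ hV.eigenvalues i := by
  rw [lamMin, dif_pos hV]
  exact ciInf_le (Finite.bddBelow_range _) i

lemma lamMin_pos [NeZero d] (hV : V.PosDef) : 0 < lamMin V := by
  obtain ⟨i, hi⟩ := exists_eq_ciInf_of_finite (f := hV.isHermitian.eigenvalues)
  rw [lamMin, dif_pos hV.isHermitian, ← hi]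
  exact hV.eigenvalues_pos i

open scoped MatrixOrder in
lemma lamMin_mul_dotProduct_self_le (hV : V.IsHermitian) (z : Fin d → ℝ) :
    lamMin V * (z ⬝ᵥ z) ≤ z ⬝ᵥ V *ᵥ z := by
  have hle : algebraMap ℝ _ (lamMin V) ≤ V := by
    rw [algebraMap_le_iff_le_spectrum hV.isSelfAdjoint, hV.spectrum_real_eq_range_eigenvalues]
    rintro _ ⟨i, rfl⟩
    exact lamMin_le_eigenvalues hV i
  simpa [Matrix.sub_mulVec, Algebra.algebraMap_eq_smul_one, Matrix.smul_mulVec]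
    using (Matrix.le_iff.mp hle).dotProduct_mulVec_nonneg z

lemma eucNorm_le_wnorm_div_sqrt_lamMin (hV : V.PosDef) (z : Fin d → ℝ) :
    eucNorm z ≤ wnorm V z / √(lamMin V) := by
  cases d with
  | zero => simp [eucNorm, wnorm, dotProduct]
  | succ d =>
    have hzz : 0 ≤ z ⬝ᵥ z := Fintype.sum_nonneg fun i => mul_self_nonneg (z i)
    rw [le_div_iff₀ (Real.sqrt_pos.mpr (lamMin_pos hV)), eucNorm, wnorm, ← Real.sqrt_mul hzz]
    exact Real.sqrt_le_sqrt (by linarith [lamMin_mul_dotProduct_self_le hV.isHermitian z])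

end lamMin

theorem stmt3_general {d : ℕ} (V : Matrix (Fin d) (Fin d) ℝ) (hV : V.PosDef)
    (θhat : Fin d → ℝ) (β : ℝ)
    (B : Set (Fin d → ℝ)) (hB : B = {θ : Fin d → ℝ | wnorm V (θhat - θ) ≤ β})
    (α rb : ℝ) (φ ψ : Fin d → ℝ) (hφ : eucNorm φ ≤ 1)
    (h1 : ψ ⬝ᵥ θhat ≤ -(β / Real.sqrt (lamMin V)) + (1 - α) * rb)
    (h2 : φ ⬝ᵥ θhat ≤ ψ ⬝ᵥ θhat) :
    ∀ v ∈ B, φ ⬝ᵥ v ≤ (1 - α) * rb := by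
  intro v hv
  rw [hB] at hv
  have hdev : |φ ⬝ᵥ (θhat - v)| ≤ β / √(lamMin V) := calc
    _ ≤ eucNorm φ * eucNorm (θhat - v) := abs_dotProduct_le_eucNorm_mul_eucNorm _ _
    _ ≤ 1 * (wnorm V (θhat - v) / √(lamMin V)) :=
      mul_le_mul hφ (eucNorm_le_wnorm_div_sqrt_lamMin hV _) (eucNorm_nonneg _) zero_le_one
    _ ≤ β / √(lamMin V) := by rw [one_mul]; gcongr; exact hv
  have hsplit : φ ⬝ᵥ v = φ ⬝ᵥ θhat - φ ⬝ᵥ (θhat - v) := by rw [dotProduct_sub]; ring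
  linarith [neg_abs_le (φ ⬝ᵥ (θhat - v))]

theorem stmt3 {d : ℕ} (V : Matrix (Fin d) (Fin d) ℝ) (hV : V.PosDef)
    (θhat : Fin d → ℝ) (β : ℝ) (hβ : 0 ≤ β)
    (B : Set (Fin d → ℝ)) (hB : B = {θ : Fin d → ℝ | wnorm V (θhat - θ) ≤ β})
    (α rb : ℝ) (φ ψ : Fin d → ℝ) (hφ : eucNorm φ ≤ 1)
    (h1 : ψ ⬝ᵥ θhat ≤ -(β / Real.sqrt (lamMin V)) + (1 - α) * rb)
    (h2 : φ ⬝ᵥ θhat ≤ ψ ⬝ᵥ θhat) :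
    ∀ v ∈ B, φ ⬝ᵥ v ≤ (1 - α) * rb :=
  stmt3_general V hV θhat β B hB α rb φ ψ hφ h1 h2
end

section
/- Let M ≥ 1 be an integer, ρ ∈ (0,1), d ≥ 1 an integer, δ ∈ (0,1), and set L := log(d/δ) > 0. Let σ ≥ 0, λ > 0, α ∈ (0,1], r_l > 0, T ≥ 0, and define β₀ := σ·√(2·log(1/δ)) + √λ and C := (2(2 − α)·β₀/(α r_l))² − (λ + M·T); assume C ≥ 0. If N ≥ 0 satisfies 2Mρ(1 − ρ)·N + C ≤ √(32·M·ρ²(1 − ρ)²·N·L), then N ≥ (4/M)·L − C/(2Mρ(1 − ρ)) − √((16/M²)·L² − 4·C·L/(M²ρ(1 − ρ))) and N ≤ √((96/M²)·L² − 16·C·L/(M²ρ(1 − ρ))). -/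
/-!
Squaring the hypothesis gives the quadratic inequality `(2mrN + C)² ≤ 32 m r² N L` in `N`, with
`m = M` and `r = ρ(1 - ρ)`. Completing the square turns it into `(N - p)² ≤ D`, where `p ± √D` are
the two roots: this is the lower bound. Since `D ≥ 0` forces `C ≤ 4rL`, the crude estimate
`N² ≤ 2(N - p)² + 2p² ≤ 2D + 2p²` gives the upper bound.
-/

open Real

lemma sub_sqrt_le_of_sq_sub_le {x p D : ℝ} (h : (x - p) ^ 2 ≤ D) : p - √D ≤ x := by
  linarith [abs_le_sqrt h, neg_abs_le (x - p)]

lemma sq_le_of_sq_sub_le {x p D : ℝ} (h : (x - p) ^ 2 ≤ D) : x ^ 2 ≤ 2 * D + 2 * p ^ 2 := by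
  nlinarith [sq_nonneg (x - 2 * p)]

section ConservativeRounds

variable {m r L C N : ℝ}

lemma sq_sub_root_center_sub_disc (hm : m ≠ 0) (hr : r ≠ 0) :
    (N - (4 / m * L - C / (2 * m * r))) ^ 2 - (16 / m ^ 2 * L ^ 2 - 4 * C * L / (m ^ 2 * r)) =
      ((2 * m * r * N + C) ^ 2 - 32 * m * r ^ 2 * N * L) / (4 * m ^ 2 * r ^ 2) := by
  field_simp
  ring

lemma sq_sub_root_center_le_disc (hm : 0 < m) (hr : 0 < r)
    (h : (2 * m * r * N + C) ^ 2 ≤ 32 * m * r ^ 2 * N * L) :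
    (N - (4 / m * L - C / (2 * m * r))) ^ 2 ≤ 16 / m ^ 2 * L ^ 2 - 4 * C * L / (m ^ 2 * r) := by
  have hdiff := sq_sub_root_center_sub_disc (N := N) (L := L) (C := C) hm.ne' hr.ne'
  have : ((2 * m * r * N + C) ^ 2 - 32 * m * r ^ 2 * N * L) / (4 * m ^ 2 * r ^ 2) ≤ 0 :=
    div_nonpos_of_nonpos_of_nonneg (by linarith) (by positivity)
  linarith

lemma two_mul_disc_add_two_mul_sq_root_center_le (hm : 0 < m) (hr : 0 < r) (hL : 0 < L)
    (hC : 0 ≤ C) (hD : 0 ≤ 16 / m ^ 2 * L ^ 2 - 4 * C * L / (m ^ 2 * r)) :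
    2 * (16 / m ^ 2 * L ^ 2 - 4 * C * L / (m ^ 2 * r)) + 2 * (4 / m * L - C / (2 * m * r)) ^ 2 ≤
      96 / m ^ 2 * L ^ 2 - 16 * C * L / (m ^ 2 * r) := by
  have hCL : C ≤ 4 * r * L := by
    have hD' : 16 / m ^ 2 * L ^ 2 - 4 * C * L / (m ^ 2 * r) =
        4 * L * (4 * r * L - C) / (m ^ 2 * r) := by
      field_simp
      ring
    rw [hD', le_div_iff₀ (by positivity), zero_mul] at hD
    linarith [nonneg_of_mul_nonneg_right hD (by positivity : (0:ℝ) < 4 * L)]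
  have hgap : 96 / m ^ 2 * L ^ 2 - 16 * C * L / (m ^ 2 * r) -
      (2 * (16 / m ^ 2 * L ^ 2 - 4 * C * L / (m ^ 2 * r)) + 2 * (4 / m * L - C / (2 * m * r)) ^ 2) =
      (64 * r ^ 2 * L ^ 2 - C ^ 2) / (2 * m ^ 2 * r ^ 2) := by
    field_simp
    ring
  have : 0 ≤ (64 * r ^ 2 * L ^ 2 - C ^ 2) / (2 * m ^ 2 * r ^ 2) :=
    div_nonneg (by nlinarith [mul_pos hr hL]) (by positivity)
  linarith

end ConservativeRounds

theorem stmt19_general (M : ℕ) (hM : 1 ≤ M) (ρ : ℝ) (hρ0 : 0 < ρ) (hρ1 : ρ < 1)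
    (L C : ℝ) (hL0 : 0 < L) (hC0 : 0 ≤ C) (N : ℝ) (hN : 0 ≤ N)
    (h : 2 * M * ρ * (1 - ρ) * N + C ≤
      Real.sqrt (32 * M * ρ ^ 2 * (1 - ρ) ^ 2 * N * L)) :
    (4 / M) * L - C / (2 * M * ρ * (1 - ρ)) -
        Real.sqrt ((16 / M ^ 2) * L ^ 2 - 4 * C * L / (M ^ 2 * ρ * (1 - ρ))) ≤ N ∧
      N ≤ Real.sqrt ((96 / M ^ 2) * L ^ 2 - 16 * C * L / (M ^ 2 * ρ * (1 - ρ))) := by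
  have hm : (0 : ℝ) < M := by exact_mod_cast hM
  have hr : 0 < ρ * (1 - ρ) := mul_pos hρ0 (sub_pos.2 hρ1)
  simp only [mul_assoc (2 * M : ℝ) ρ, mul_assoc ((M : ℝ) ^ 2) ρ] at h ⊢
  have hsq : (2 * M * (ρ * (1 - ρ)) * N + C) ^ 2 ≤ 32 * M * (ρ * (1 - ρ)) ^ 2 * N * L := by
    have hlhs : 0 ≤ 2 * M * (ρ * (1 - ρ)) * N + C := by positivity
    have hrhs : 0 ≤ 32 * M * ρ ^ 2 * (1 - ρ) ^ 2 * N * L := by positivity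
    linarith [(Real.le_sqrt hlhs hrhs).1 h, mul_pow ρ (1 - ρ) 2]
  have hquad := sq_sub_root_center_le_disc hm hr hsq
  refine ⟨sub_sqrt_le_of_sq_sub_le hquad, Real.le_sqrt_of_sq_le ?_⟩
  exact (sq_le_of_sq_sub_le hquad).trans
    (two_mul_disc_add_two_mul_sq_root_center_le hm hr hL0 hC0 ((sq_nonneg _).trans hquad))

theorem stmt19 (M d : ℕ) (hM : 1 ≤ M) (hd : 1 ≤ d)
    (ρ δ σ lam α rl T : ℝ)
    (hρ0 : 0 < ρ) (hρ1 : ρ < 1) (hδ0 : 0 < δ) (hδ1 : δ < 1)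
    (hσ : 0 ≤ σ) (hlam : 0 < lam) (hα0 : 0 < α) (hα1 : α ≤ 1)
    (hrl : 0 < rl) (hT : 0 ≤ T)
    (L β₀ C : ℝ)
    (hL : L = Real.log (d / δ)) (hL0 : 0 < L)
    (hβ₀ : β₀ = σ * Real.sqrt (2 * Real.log (1 / δ)) + Real.sqrt lam)
    (hC : C = (2 * (2 - α) * β₀ / (α * rl)) ^ 2 - (lam + M * T))
    (hC0 : 0 ≤ C)
    (N : ℝ) (hN : 0 ≤ N)
    (h : 2 * M * ρ * (1 - ρ) * N + C ≤
      Real.sqrt (32 * M * ρ ^ 2 * (1 - ρ) ^ 2 * N * L)) :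
    (4 / M) * L - C / (2 * M * ρ * (1 - ρ)) -
        Real.sqrt ((16 / M ^ 2) * L ^ 2 - 4 * C * L / (M ^ 2 * ρ * (1 - ρ))) ≤ N ∧
      N ≤ Real.sqrt ((96 / M ^ 2) * L ^ 2 - 16 * C * L / (M ^ 2 * ρ * (1 - ρ))) :=
  stmt19_general M hM ρ hρ0 hρ1 L C hL0 hC0 N hN h
end
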